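/- arXiv:2010.15803 — 3 statements merged into one kernel-verified Lean document; each statement's English description precedes it below -/
import Mathlib

section
/- Let G be a finite connected simple graph whose vertex set is partitioned into a clique K and an independent set I, with K nonempty. For each c ∈ K, let T_c be a spanning tree of G such that d_{T_c}(c,v) = d_G(c,v) for every vertex v (a shortest-path tree rooted at c). Then for all vertices u, v of G, min_{c∈K} d_{T_c}(u,v) = d_G(u,v); that is, the trivial embedding of G into the system of trees (T_c)_{c∈K} is isometric. -/
/-!
Distances in a subgraph never drop, so only `min_c d_{T_c}(u,v) ≤ d_G(u,v)` needs proof. It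
suffices to find a `c ∈ K` on a geodesic from `u` to `v`: then
`d_{T_c}(u,v) ≤ d_{T_c}(u,c) + d_{T_c}(c,v) = d_G(u,c) + d_G(c,v) = d_G(u,v)`.
If `u ∈ K` take `c = u`; if `u ∈ I`, the second vertex of a shortest `u`–`v` walk is adjacent
to `u`, hence lies in `K`.
-/

namespace SimpleGraph

variable {V : Type*} {G : SimpleGraph V} {u v : V}

lemma Connected.exists_adj_dist_eq_add_one (hG : G.Connected) (huv : u ≠ v) :
    ∃ w, G.Adj u w ∧ G.dist u v = G.dist w v + 1 := by
  obtain ⟨p, hp⟩ := hG.exists_walk_length_eq_dist u v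
  cases p with
  | nil => exact absurd rfl huv
  | @cons _ w _ hadj q =>
    refine ⟨w, hadj, le_antisymm ?_ ?_⟩
    · calc G.dist u v ≤ G.dist u w + G.dist w v := hG.dist_triangle
        _ = G.dist w v + 1 := by rw [dist_eq_one_iff_adj.mpr hadj, add_comm]
    · rw [← hp, Walk.length_cons]
      exact Nat.succ_le_succ (dist_le q)

lemma Connected.exists_mem_dist_add_dist_eq_of_isVertexCover (hG : G.Connected) {K : Set V}
    (hK : G.IsVertexCover K) (huv : u ≠ v) :
    ∃ c ∈ K, G.dist u c + G.dist c v = G.dist u v := by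
  by_cases hu : u ∈ K
  · exact ⟨u, hu, by rw [dist_self, zero_add]⟩
  obtain ⟨w, hadj, hdist⟩ := hG.exists_adj_dist_eq_add_one huv
  refine ⟨w, (hK hadj).resolve_left hu, ?_⟩
  rw [dist_eq_one_iff_adj.mpr hadj, hdist, add_comm]

lemma dist_le_of_dist_add_dist_eq {T : SimpleGraph V} (hT : T.Connected) {c : V}
    (hcu : T.dist c u = G.dist c u) (hcv : T.dist c v = G.dist c v)
    (h : G.dist u c + G.dist c v = G.dist u v) : T.dist u v ≤ G.dist u v :=
  calc T.dist u v ≤ T.dist u c + T.dist c v := hT.dist_triangle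
    _ = G.dist u v := by rw [dist_comm, hcu, hcv, dist_comm, h]

end SimpleGraph

open SimpleGraph in
theorem stmt9_general {V : Type*} (G : SimpleGraph V)
    (hconn : G.Connected)
    (K I : Finset V)
    (hcover : ∀ v : V, v ∈ K ∨ v ∈ I)
    (hI : ∀ u ∈ I, ∀ v ∈ I, ¬ G.Adj u v)
    (hKne : K.Nonempty)
    (T : V → SimpleGraph V)
    (hsub : ∀ c ∈ K, T c ≤ G)
    (htree : ∀ c ∈ K, (T c).IsTree)
    (hSPT : ∀ c ∈ K, ∀ v : V, (T c).dist c v = G.dist c v)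
    (u v : V) :
    K.inf' hKne (fun c => (T c).dist u v) = G.dist u v := by
  refine le_antisymm ?_ <| Finset.le_inf' hKne _ fun c hc =>
    ((htree c hc).connected.preconnected u v).dist_anti (hsub c hc)
  rcases eq_or_ne u v with rfl | huv
  · obtain ⟨c, hc⟩ := hKne
    exact (Finset.inf'_le _ hc).trans_eq (by rw [dist_self, dist_self])
  have hcoverK : G.IsVertexCover (K : Set V) := fun x y hxy => by
    by_contra! hxy'
    exact hI x ((hcover x).resolve_left hxy'.1) y ((hcover y).resolve_left hxy'.2) hxy
  obtain ⟨c, hc, hgeod⟩ := hconn.exists_mem_dist_add_dist_eq_of_isVertexCover hcoverK huv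
  exact (Finset.inf'_le _ hc).trans <|
    dist_le_of_dist_add_dist_eq (htree c hc).connected (hSPT c hc u) (hSPT c hc v) hgeod

theorem stmt9 {V : Type*} [Fintype V] (G : SimpleGraph V)
    (hconn : G.Connected)
    (K I : Finset V)
    (hcover : ∀ v : V, v ∈ K ∨ v ∈ I) (hdisj : Disjoint K I)
    (hK : G.IsClique (K : Set V))
    (hI : ∀ u ∈ I, ∀ v ∈ I, ¬ G.Adj u v)
    (hKne : K.Nonempty)
    (T : V → SimpleGraph V)
    (hsub : ∀ c ∈ K, T c ≤ G)
    (htree : ∀ c ∈ K, (T c).IsTree)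
    (hSPT : ∀ c ∈ K, ∀ v : V, (T c).dist c v = G.dist c v)
    (u v : V) :
    K.inf' hKne (fun c => (T c).dist u v) = G.dist u v :=
  stmt9_general G hconn K I hcover hI hKne T hsub htree hSPT u v
end

section
/- Let G be a finite connected simple graph whose vertex set V is partitioned into a clique K and an independent set I, with K nonempty. Then there exist trees (T_u)_{u∈K}, each of diameter at most 4, and maps φ_u : V → V(T_u) such that for all v, v' ∈ V: if d_G(v,v') ≥ 3 then Σ_{u∈K} d_{T_u}(φ_u(v),φ_u(v')) = 4·|K|, and if d_G(v,v') ≤ 2 then Σ_{u∈K} d_{T_u}(φ_u(v),φ_u(v')) ≤ 4·|K| − 1. In particular, the map v ↦ (φ_u(v))_{u∈K} into the Cartesian product of the trees (T_u)_{u∈K} (whose distance is the sum of the coordinatewise tree distances) separates the pairs at distance ≥ 3 in G from all other pairs. -/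
/-!
For `u ∈ K` the tree `T u` has a root, a child of the root for every vertex of `G`, and a leaf
for every vertex `v`, hung below the child `u` if `v ∈ K` or `v ~ u` and below the child `v`
otherwise. Two leaves are at distance `4` when they hang below different children and at most `2`
otherwise. If `v` and `v'` share a branch of some `T u`, they lie within distance `1` of `u`
(`K` is a clique) or coincide, so `d(v, v') ≤ 2`. Conversely, if `0 < d(v, v') ≤ 2`, every edge
of a shortest path meets `K` (`I` is independent), so some `u ∈ K` on that path has each of `v`,
`v'` in `K` or adjacent to it; they share a branch of `T u`, which brings the sum below `4|K|`.
-/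

namespace SimpleGraph

variable {V : Type*}

theorem Walk.abs_sub_le_length {G : SimpleGraph V} {g : V → ℤ}
    (hg : ∀ a b, G.Adj a b → |g a - g b| ≤ 1) {a b : V} (p : G.Walk a b) :
    |g a - g b| ≤ p.length := by
  induction p with
  | nil => simp
  | @cons a c b h q ih =>
    calc |g a - g b| ≤ |g a - g c| + |g c - g b| := abs_sub_le _ _ _
      _ ≤ 1 + q.length := add_le_add (hg a c h) ih
      _ = (cons h q).length := by simp [add_comm]

theorem Reachable.abs_sub_le_dist {G : SimpleGraph V} {g : V → ℤ}
    (hg : ∀ a b, G.Adj a b → |g a - g b| ≤ 1) {a b : V} (h : G.Reachable a b) :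
    |g a - g b| ≤ G.dist a b := by
  obtain ⟨p, hp⟩ := h.exists_walk_length_eq_dist
  exact hp ▸ p.abs_sub_le_length hg

def parentGraph (p : V → V) : SimpleGraph V :=
  fromRel fun a b => a = p b

variable {p : V → V}

theorem parentGraph_adj {a b : V} :
    (parentGraph p).Adj a b ↔ a ≠ b ∧ (a = p b ∨ b = p a) := by
  simp [parentGraph]

theorem parentGraph_reachable_parent (v : V) : (parentGraph p).Reachable v (p v) := by
  by_cases h : p v = v
  · rw [h]
  · exact Adj.reachable (parentGraph_adj.mpr ⟨Ne.symm h, Or.inr rfl⟩)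

theorem parentGraph_dist_parent_le_one (v : V) : (parentGraph p).dist v (p v) ≤ 1 := by
  by_cases h : p v = v
  · simp [h]
  · exact (dist_eq_one_iff_adj.mpr (parentGraph_adj.mpr ⟨Ne.symm h, Or.inr rfl⟩)).le

theorem parentGraph_abs_sub_le_dist {g : V → ℤ} (hg : ∀ v, |g v - g (p v)| ≤ 1) {a b : V}
    (h : (parentGraph p).Reachable a b) : |g a - g b| ≤ (parentGraph p).dist a b := by
  refine h.abs_sub_le_dist fun a b hab => ?_
  rcases (parentGraph_adj.mp hab).2 with rfl | rfl
  · rw [abs_sub_comm]; exact hg b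
  · exact hg a

theorem isAcyclic_parentGraph (d : V → ℕ) (hd : ∀ v, p v ≠ v → d (p v) < d v) :
    (parentGraph p).IsAcyclic := by
  classical
  -- at a vertex of maximal depth on a cycle, both cycle neighbours would have to be its parent
  intro v c hc
  obtain ⟨t, ht, hmax⟩ := c.support.toFinset.exists_max_image d ⟨v, by simp⟩
  rw [List.mem_toFinset] at ht
  have eq_parent : ∀ a ∈ c.support, (parentGraph p).Adj t a → a = p t := by
    intro a ha hta
    obtain ⟨hne, rfl | rfl⟩ := parentGraph_adj.mp hta
    · exact absurd (hmax a (List.mem_toFinset.mpr ha)) (not_le.mpr (hd a hne))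
    · rfl
  set c' := c.rotate t ht
  have hc' : c'.IsCycle := hc.rotate ht
  have mem : ∀ i, c'.getVert i ∈ c.support := fun i =>
    (c.mem_support_rotate_iff t ht).mp (c'.getVert_mem_support i)
  exact hc'.snd_ne_penultimate <| (eq_parent _ (mem 1) (c'.adj_snd hc'.not_nil)).trans
    (eq_parent _ (mem _) (c'.adj_penultimate hc'.not_nil).symm).symm

section Spider

variable {α β : Type*} (f : α → β)

/-- `none` is the root, `some (inl w)` its children, and `some (inr x)` a leaf below
`some (inl (f x))`. -/
def spiderParent : Option (β ⊕ α) → Option (β ⊕ α)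
  | some (.inr x) => some (.inl (f x))
  | _ => none

def spider : SimpleGraph (Option (β ⊕ α)) :=
  parentGraph (spiderParent f)

variable {f}

theorem spiderParent_spiderParent (a : Option (β ⊕ α)) :
    spiderParent f (spiderParent f a) = none := by
  rcases a with _ | _ | _ <;> rfl

theorem spider_reachable_root (a : Option (β ⊕ α)) : (spider f).Reachable a none := by
  rw [← spiderParent_spiderParent (f := f) a]
  exact (parentGraph_reachable_parent a).trans (parentGraph_reachable_parent _)

theorem spider_connected : (spider f).Connected :=
  Connected.mk fun a b => (spider_reachable_root a).trans (spider_reachable_root b).symm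

theorem spider_isTree : (spider f).IsTree := by
  refine ⟨spider_connected, isAcyclic_parentGraph
    (fun a => match a with | none => 0 | some (.inl _) => 1 | some (.inr _) => 2) ?_⟩
  rintro (_ | _ | _) h <;> simp_all [spiderParent]

theorem spider_dist_root_le_two (a : Option (β ⊕ α)) : (spider f).dist a none ≤ 2 := by
  calc (spider f).dist a none
      ≤ (spider f).dist a (spiderParent f a) + (spider f).dist (spiderParent f a) none :=
        spider_connected.dist_triangle
    _ ≤ 1 + 1 := by
      rw [← spiderParent_spiderParent (f := f) a]
      exact add_le_add (parentGraph_dist_parent_le_one a) (parentGraph_dist_parent_le_one _)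

theorem spider_dist_le_four (a b : Option (β ⊕ α)) : (spider f).dist a b ≤ 4 := by
  calc (spider f).dist a b ≤ (spider f).dist a none + (spider f).dist none b :=
        spider_connected.dist_triangle
    _ ≤ 2 + 2 := by
      rw [dist_comm (u := none)]
      exact add_le_add (spider_dist_root_le_two a) (spider_dist_root_le_two b)

theorem spider_dist_leaf_le_two {x y : α} (h : f x = f y) :
    (spider f).dist (some (.inr x)) (some (.inr y)) ≤ 2 := by
  calc (spider f).dist (some (.inr x)) (some (.inr y))
      ≤ (spider f).dist (some (.inr x)) (some (.inl (f x))) +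
        (spider f).dist (some (.inr y)) (some (.inl (f y))) := by
        rw [h, dist_comm (G := spider f) (u := some (.inr y))]; exact spider_connected.dist_triangle
    _ ≤ 1 + 1 := add_le_add (parentGraph_dist_parent_le_one _) (parentGraph_dist_parent_le_one _)

theorem spider_dist_leaf_eq_four {x y : α} (h : f x ≠ f y) :
    (spider f).dist (some (.inr x)) (some (.inr y)) = 4 := by
  classical
  -- `g` is the distance to the leaves below `some (inl (f x))`, hence 1-Lipschitz
  let g : Option (β ⊕ α) → ℤ
    | none => 2
    | some (.inl w) => if w = f x then 1 else 3
    | some (.inr z) => if f z = f x then 0 else 4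
  have hg : ∀ a, |g a - g (spiderParent f a)| ≤ 1 := by
    rintro (_ | w | z) <;> simp only [g, spiderParent] <;> (try split_ifs) <;> norm_num
  have hlower := parentGraph_abs_sub_le_dist hg
    (spider_connected (f := f) (some (.inr x)) (some (.inr y)))
  norm_num [g, Ne.symm h] at hlower
  exact le_antisymm (spider_dist_le_four _ _) (by exact_mod_cast hlower)

end Spider

section SplitGraph

variable {G : SimpleGraph V} {K I : Finset V}

open Classical in
/-- The vertex below which `v` hangs in the tree attached to `u`. -/
noncomputable def branch (G : SimpleGraph V) (K : Finset V) (u v : V) : V :=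
  if v ∈ K ∨ G.Adj u v then u else v

theorem dist_le_two_of_branch_eq (hconn : G.Connected) (hK : G.IsClique (K : Set V))
    {u v v' : V} (hu : u ∈ K) (h : branch G K u v = branch G K u v') : G.dist v v' ≤ 2 := by
  have near : ∀ w, w ∈ K ∨ G.Adj u w → G.dist u w ≤ 1 := by
    intro w hw
    by_cases huw : u = w
    · simp [huw]
    · have hadj : G.Adj u w := hw.elim (hK hu · huw) id
      exact (dist_eq_one_iff_adj.mpr hadj).le
  unfold branch at h
  split_ifs at h with hv hv'
  · calc G.dist v v' ≤ G.dist v u + G.dist u v' := hconn.dist_triangle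
      _ ≤ 1 + 1 := add_le_add (dist_comm.trans_le (near v hv)) (near v' hv')
  · exact absurd (Or.inl (h ▸ hu)) hv'
  · exact absurd (Or.inl (h ▸ hu)) hv
  · simp [h]

theorem exists_branch_eq_of_dist_le_two (hconn : G.Connected)
    (hcover : ∀ v : V, v ∈ K ∨ v ∈ I) (hI : ∀ u ∈ I, ∀ v ∈ I, ¬ G.Adj u v)
    {v v' : V} (hne : v ≠ v') (h : G.dist v v' ≤ 2) :
    ∃ u ∈ K, branch G K u v = branch G K u v' := by
  have mem_of_adj : ∀ a b, G.Adj a b → a ∉ K → b ∈ K := fun a b hab ha =>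
    by_contra fun hb => hI a ((hcover a).resolve_left ha) b ((hcover b).resolve_left hb) hab
  have branch_eq : ∀ u ∈ K, v ∈ K ∨ G.Adj u v → v' ∈ K ∨ G.Adj u v' →
      ∃ u ∈ K, branch G K u v = branch G K u v' := fun u hu hv hv' =>
    ⟨u, hu, by simp only [branch, if_pos hv, if_pos hv']⟩
  obtain ⟨p, hp⟩ := hconn.exists_walk_length_eq_dist v v'
  cases p with
  | nil => exact absurd rfl hne
  | @cons _ w _ hvw q =>
    cases q with
    | nil =>
      by_cases hv : v ∈ K
      · exact branch_eq v hv (Or.inl hv) (Or.inr hvw)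
      · have hv' := mem_of_adj v v' hvw hv
        exact branch_eq v' hv' (Or.inr hvw.symm) (Or.inl hv')
    | @cons _ x _ hwv' r =>
      have hr : r.length = 0 := by simp only [Walk.length_cons] at hp; omega
      have hx := Walk.eq_of_length_eq_zero hr
      subst x
      by_cases hw : w ∈ K
      · exact branch_eq w hw (Or.inr hvw.symm) (Or.inr hwv')
      · have hv := mem_of_adj w v hvw.symm hw
        exact branch_eq v hv (Or.inl hv) (Or.inl (mem_of_adj w v' hwv' hw))

end SplitGraph

end SimpleGraph

open SimpleGraph

theorem stmt10_general {V : Type*} [Fintype V] (G : SimpleGraph V)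
    (hconn : G.Connected)
    (K I : Finset V)
    (hcover : ∀ v : V, v ∈ K ∨ v ∈ I)
    (hK : G.IsClique (K : Set V))
    (hI : ∀ u ∈ I, ∀ v ∈ I, ¬ G.Adj u v) :
    ∃ (W : V → Type) (_ : ∀ u, Fintype (W u)) (T : ∀ u, SimpleGraph (W u))
      (φ : ∀ u, V → W u),
      (∀ u ∈ K, (T u).IsTree) ∧
      (∀ u ∈ K, ∀ a b : W u, (T u).dist a b ≤ 4) ∧
      (∀ v v' : V,
        (3 ≤ G.dist v v' →
          ∑ u ∈ K, (T u).dist (φ u v) (φ u v') = 4 * K.card) ∧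
        (G.dist v v' ≤ 2 →
          ∑ u ∈ K, (T u).dist (φ u v) (φ u v') ≤ 4 * K.card - 1)) := by
  -- `Fin` replaces `V` so that the trees live in `Type`
  let e := Fintype.equivFin V
  let T u := spider (e ∘ branch G K u ∘ e.symm)
  refine ⟨fun _ => Option (Fin (Fintype.card V) ⊕ Fin (Fintype.card V)), fun _ => inferInstance,
    T, fun _ v => some (.inr (e v)), fun _ _ => spider_isTree, fun _ _ => spider_dist_le_four,
    fun v v' => ⟨fun hfar => ?_, fun hnear => ?_⟩⟩
  · refine (Finset.sum_const_nat fun u hu => spider_dist_leaf_eq_four ?_).trans (mul_comm _ _)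
    simpa using mt (dist_le_two_of_branch_eq (v := v) (v' := v') hconn hK hu) (by omega)
  · by_cases hvv : v = v'
    · simp [hvv]
    obtain ⟨u₀, hu₀, h⟩ := exists_branch_eq_of_dist_le_two hconn hcover hI hvv hnear
    have hlt := Finset.sum_lt_sum
      (fun u _ => spider_dist_le_four (f := e ∘ branch G K u ∘ e.symm) (some (.inr (e v)))
        (some (.inr (e v'))))
      ⟨u₀, hu₀, (spider_dist_leaf_le_two (by simp [h])).trans_lt (by norm_num : 2 < 4)⟩
    rw [Finset.sum_const, smul_eq_mul] at hlt
    dsimp only [T]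
    omega

theorem stmt10 {V : Type*} [Fintype V] (G : SimpleGraph V)
    (hconn : G.Connected)
    (K I : Finset V)
    (hcover : ∀ v : V, v ∈ K ∨ v ∈ I) (hdisj : Disjoint K I)
    (hK : G.IsClique (K : Set V))
    (hI : ∀ u ∈ I, ∀ v ∈ I, ¬ G.Adj u v)
    (hKne : K.Nonempty) :
    ∃ (W : V → Type) (_ : ∀ u, Fintype (W u)) (T : ∀ u, SimpleGraph (W u))
      (φ : ∀ u, V → W u),
      (∀ u ∈ K, (T u).IsTree) ∧
      (∀ u ∈ K, ∀ a b : W u, (T u).dist a b ≤ 4) ∧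
      (∀ v v' : V,
        (3 ≤ G.dist v v' →
          ∑ u ∈ K, (T u).dist (φ u v) (φ u v') = 4 * K.card) ∧
        (G.dist v v' ≤ 2 →
          ∑ u ∈ K, (T u).dist (φ u v) (φ u v') ≤ 4 * K.card - 1)) :=
  stmt10_general G hconn K I hcover hK hI
end

section
/- Let T be a finite tree, let S be a nonempty set of vertices of T, and let W = {w ∈ V(T) : there exist s, t ∈ S with d_T(s,w) + d_T(w,t) = d_T(s,t)}. Then for every vertex v of T there exists a gate g ∈ W such that d_T(v,w) = d_T(v,g) + d_T(g,w) for every w ∈ W; consequently, max_{s∈S} d_T(v,s) = d_T(v,g) + max_{s∈S} d_T(g,s). -/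
/-!
Let `g` be a vertex of `W` closest to `v`. In a tree any three vertices have a median, and `W`
is geodesically convex: a vertex between `s` and `t` lies between `g` and `s` or between `g`
and `t`, for every `g`. So for `w ∈ W` the median `m` of `v`, `g`, `w` lies on the geodesic from
`g` to `w`, hence in `W`, and on the geodesic from `v` to `g`; minimality of `g` forces `m = g`,
i.e. `g` lies between `v` and `w`. The formula for the eccentricity follows by taking maxima.
-/

namespace SimpleGraph

variable {V : Type*} {G : SimpleGraph V} {u v w x y z m s t : V}

def interval (G : SimpleGraph V) (u v : V) : Set V :=
  {w | G.dist u w + G.dist w v = G.dist u v}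

theorem mem_interval : w ∈ G.interval u v ↔ G.dist u w + G.dist w v = G.dist u v := Iff.rfl

theorem left_mem_interval : u ∈ G.interval u v := by
  simp [mem_interval]

theorem interval_comm (u v : V) : G.interval u v = G.interval v u := by
  ext w
  rw [mem_interval, mem_interval, add_comm, dist_comm, G.dist_comm (u := w), G.dist_comm (u := u) (v := v)]

theorem Connected.interval_subset (hG : G.Connected) (hw : w ∈ G.interval u v) :
    G.interval u w ⊆ G.interval u v := by
  intro x hx
  rw [mem_interval] at *
  have := hG.dist_triangle (u := u) (v := x) (w := v)
  have := hG.dist_triangle (u := x) (v := w) (w := v)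
  omega

theorem Walk.IsPath.append {p : G.Walk u v} {q : G.Walk v w} (hp : p.IsPath) (hq : q.IsPath)
    (h : ∀ x ∈ p.support, x ∈ q.support → x = v) : (p.append q).IsPath := by
  have hq' := hq.support_nodup
  rw [← q.cons_tail_support, List.nodup_cons] at hq'
  rw [Walk.isPath_def, Walk.support_append, List.nodup_append]
  refine ⟨hp.support_nodup, hq'.2, fun x hxp y hyq hxy => ?_⟩
  subst hxy
  obtain rfl := h x hxp (q.cons_tail_support ▸ List.mem_cons_of_mem _ hyq)
  exact hq'.1 hyq

namespace IsTree

theorem length_eq_dist_of_isPath (hG : G.IsTree) {p : G.Walk u v} (hp : p.IsPath) :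
    p.length = G.dist u v := by
  obtain ⟨q, hq, hlen⟩ := hG.connected.exists_path_of_dist u v
  obtain rfl : p = q := congrArg Subtype.val ((hG.isAcyclic.subsingleton_path u v).elim ⟨p, hp⟩ ⟨q, hq⟩)
  exact hlen

theorem mem_support_iff_mem_interval (hG : G.IsTree) {p : G.Walk u v} (hp : p.IsPath) :
    w ∈ p.support ↔ w ∈ G.interval u v := by
  classical
  constructor
  · intro hw
    have hlen := congrArg Walk.length (p.take_spec hw)
    rwa [Walk.length_append, hG.length_eq_dist_of_isPath (hp.takeUntil hw),
      hG.length_eq_dist_of_isPath (hp.dropUntil hw), hG.length_eq_dist_of_isPath hp] at hlen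
  · intro hw
    obtain ⟨q, -, hq⟩ := hG.connected.exists_path_of_dist u w
    obtain ⟨r, -, hr⟩ := hG.connected.exists_path_of_dist w v
    have hqr : (q.append r).IsPath :=
      Walk.isPath_of_length_eq_dist _ (by rw [Walk.length_append, hq, hr]; exact hw)
    obtain rfl : q.append r = p :=
      congrArg Subtype.val ((hG.isAcyclic.subsingleton_path u v).elim ⟨_, hqr⟩ ⟨p, hp⟩)
    exact (Walk.mem_support_append_iff _ _).2 (Or.inl q.end_mem_support)

theorem mem_interval_of_forall_dist_le (hG : G.IsTree) {p : G.Walk y z} (hp : p.IsPath)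
    (hm : m ∈ p.support) (hmin : ∀ u ∈ p.support, G.dist x m ≤ G.dist x u) :
    m ∈ G.interval x y := by
  classical
  obtain ⟨q, hq, -⟩ := hG.connected.exists_path_of_dist x m
  have hqr : (q.append (p.takeUntil m hm).reverse).IsPath := by
    refine hq.append (hp.takeUntil hm).reverse fun u huq hur => ?_
    rw [Walk.support_reverse, List.mem_reverse] at hur
    have hxu := (hG.mem_support_iff_mem_interval hq).1 huq
    have := hmin u (p.support_takeUntil_subset_support hm hur)
    rw [mem_interval] at hxu
    exact hG.connected.dist_eq_zero_iff.1 (by omega)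
  have hlen := hG.length_eq_dist_of_isPath hqr
  rwa [Walk.length_append, Walk.length_reverse, hG.length_eq_dist_of_isPath hq,
    hG.length_eq_dist_of_isPath (hp.takeUntil hm), G.dist_comm (u := y)] at hlen

theorem exists_median (hG : G.IsTree) (x y z : V) :
    ∃ m, m ∈ G.interval y z ∧ m ∈ G.interval x y ∧ m ∈ G.interval x z := by
  classical
  obtain ⟨p, hp, -⟩ := hG.connected.exists_path_of_dist y z
  obtain ⟨m, hmp, hmin⟩ :=
    p.support.toFinset.exists_min_image (G.dist x) ⟨y, by simp⟩
  rw [List.mem_toFinset] at hmp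
  replace hmin : ∀ u ∈ p.support, G.dist x m ≤ G.dist x u :=
    fun u hu => hmin u (List.mem_toFinset.2 hu)
  refine ⟨m, (hG.mem_support_iff_mem_interval hp).1 hmp,
    hG.mem_interval_of_forall_dist_le hp hmp hmin, ?_⟩
  exact hG.mem_interval_of_forall_dist_le hp.reverse (by simpa using hmp) (by simpa using hmin)

theorem mem_interval_or_mem_interval (hG : G.IsTree) (hm : m ∈ G.interval u v)
    (hw : w ∈ G.interval u v) : w ∈ G.interval u m ∨ w ∈ G.interval m v := by
  classical
  obtain ⟨p, hp, -⟩ := hG.connected.exists_path_of_dist u v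
  rw [← hG.mem_support_iff_mem_interval hp] at hm hw
  rw [← p.take_spec hm, Walk.mem_support_append_iff] at hw
  exact hw.imp (hG.mem_support_iff_mem_interval (hp.takeUntil hm)).1
    (hG.mem_support_iff_mem_interval (hp.dropUntil hm)).1

theorem mem_interval_or_of_mem_interval (hG : G.IsTree) (hw : w ∈ G.interval s t) (g : V) :
    w ∈ G.interval g s ∨ w ∈ G.interval g t := by
  obtain ⟨m, hm, hgs, hgt⟩ := hG.exists_median g s t
  rw [interval_comm g] at hgs hgt ⊢
  rw [interval_comm g]
  refine (hG.mem_interval_or_mem_interval hm hw).imp (hG.connected.interval_subset hgs ·) ?_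
  rw [interval_comm m]
  exact (hG.connected.interval_subset hgt ·)

end IsTree

def geodesicHull (G : SimpleGraph V) (S : Set V) : Set V :=
  {w | ∃ s ∈ S, ∃ t ∈ S, w ∈ G.interval s t}

def IsGeodesicallyConvex (G : SimpleGraph V) (K : Set V) : Prop :=
  ∀ ⦃x⦄, x ∈ K → ∀ ⦃y⦄, y ∈ K → G.interval x y ⊆ K

namespace IsTree

theorem isGeodesicallyConvex_geodesicHull (hG : G.IsTree) (S : Set V) :
    G.IsGeodesicallyConvex (G.geodesicHull S) := by
  rintro g ⟨s, hs, t, ht, hg⟩ w ⟨s', hs', t', ht', hw⟩ m hm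
  have of_mem_interval : ∀ a ∈ S, w ∈ G.interval g a → m ∈ G.geodesicHull S := by
    intro a ha hwa
    have hma : m ∈ G.interval a g := by
      rw [interval_comm]
      exact hG.connected.interval_subset hwa hm
    rcases hG.mem_interval_or_of_mem_interval hg a with hb | hb
    · exact ⟨a, ha, s, hs, hG.connected.interval_subset hb hma⟩
    · exact ⟨a, ha, t, ht, hG.connected.interval_subset hb hma⟩
  rcases hG.mem_interval_or_of_mem_interval hw g with h | h
  exacts [of_mem_interval s' hs' h, of_mem_interval t' ht' h]

theorem exists_gate (hG : G.IsTree) {K : Set V} (hK : G.IsGeodesicallyConvex K)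
    (hne : K.Nonempty) (v : V) : ∃ g ∈ K, ∀ w ∈ K, g ∈ G.interval v w := by
  set g := Function.argminOn (G.dist v) K hne
  have hgK : g ∈ K := Function.argminOn_mem _ _ _
  refine ⟨g, hgK, fun w hw => ?_⟩
  obtain ⟨m, hm, hvg, hvw⟩ := hG.exists_median v g w
  have hle : G.dist v g ≤ G.dist v m := Function.argminOn_le _ _ (hK hgK hw hm)
  obtain rfl : m = g := by
    rw [mem_interval] at hvg
    exact hG.connected.dist_eq_zero_iff.1 (by omega)
  exact hvw

end IsTree

end SimpleGraph

open SimpleGraph in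
theorem stmt13_general {V : Type*} (T : SimpleGraph V) (hT : T.IsTree)
    (S : Finset V) (hS : S.Nonempty)
    (W : Finset V)
    (hW : ∀ w : V, w ∈ W ↔ ∃ s ∈ S, ∃ t ∈ S, T.dist s w + T.dist w t = T.dist s t)
    (v : V) :
    ∃ g ∈ W, (∀ w ∈ W, T.dist v w = T.dist v g + T.dist g w) ∧
      S.sup (fun s => T.dist v s) = T.dist v g + S.sup (fun s => T.dist g s) := by
  have hW_eq : (W : Set V) = T.geodesicHull S := Set.ext hW
  have hSW : S ⊆ W := fun s hs => (hW s).2 ⟨s, hs, s, hs, left_mem_interval⟩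
  obtain ⟨g, hgW, hgate⟩ := hT.exists_gate (K := W)
    (hW_eq ▸ hT.isGeodesicallyConvex_geodesicHull S) (Finset.coe_nonempty.2 (hS.mono hSW)) v
  have hdist : ∀ w ∈ W, T.dist v w = T.dist v g + T.dist g w := fun w hw => (hgate w hw).symm
  refine ⟨g, hgW, hdist, ?_⟩
  rw [Finset.add_sup hS]
  exact Finset.sup_congr rfl fun s hs => hdist s (hSW hs)

theorem stmt13 {V : Type*} [Fintype V] (T : SimpleGraph V) (hT : T.IsTree)
    (S : Finset V) (hS : S.Nonempty)
    (W : Finset V)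
    (hW : ∀ w : V, w ∈ W ↔ ∃ s ∈ S, ∃ t ∈ S, T.dist s w + T.dist w t = T.dist s t)
    (v : V) :
    ∃ g ∈ W, (∀ w ∈ W, T.dist v w = T.dist v g + T.dist g w) ∧
      S.sup (fun s => T.dist v s) = T.dist v g + S.sup (fun s => T.dist g s) :=
  stmt13_general T hT S hS W hW v
end
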